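/- In the hard instance, every feasible round that contains a dummy job contains at most three jobs: at most one dummy job, at most one job from A∪B, and at most one job from A'∪B'. -/
import Mathlib


open scoped Classical

/-- A job on the path: source vertex `s`, sink vertex `t`, demand `d`. -/
structure Job where
  s : ℤ
  t : ℤ
  d : ℤ
  deriving DecidableEq

/-- The width of a job. -/
def Job.w (j : Job) : ℤ := j.t - j.s

/-- Job `j` uses the edge `e_k` (joining vertices `k-1` and `k`) iff `s_j < k ≤ t_j`. -/
def Job.uses (j : Job) (k : ℤ) : Prop := j.s < k ∧ k ≤ j.t

/-- Indices of the jobs of the hard instance. -/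
inductive Idx (q nd : ℕ) where
  | aX  (i : Fin q)
  | aX' (i : Fin q)
  | aY  (j : Fin q)
  | aY' (j : Fin q)
  | aZ  (k : Fin q)
  | aZ' (k : Fin q)
  | b   (l : Fin (2 * q))
  | b'  (l : Fin (2 * q))
  | dummy (d : Fin nd)
  deriving DecidableEq, Fintype

namespace Hard

variable (q : ℕ)

def ρ : ℤ := 32 * q
def γ : ℤ := (ρ q) ^ 4 + 15

def x' (i : Fin q) : ℤ := ((i : ℕ) + 1) * ρ q + 1
def y' (j : Fin q) : ℤ := ((j : ℕ) + 1) * (ρ q) ^ 2 + 2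
def z' (k : Fin q) : ℤ := ((k : ℕ) + 1) * (ρ q) ^ 3 + 4
def τ' (trip : Fin q × Fin q × Fin q) : ℤ :=
  (ρ q) ^ 4 - ((trip.2.2 : ℕ) + 1) * (ρ q) ^ 3 - ((trip.2.1 : ℕ) + 1) * (ρ q) ^ 2
    - ((trip.1 : ℕ) + 1) * ρ q + 8

def alphaN : ℕ := (⌊(0.9690082645 : ℚ) * q⌋).toNat
def betaN : ℕ := (⌈(0.979338843 : ℚ) * q⌉).toNat
/-- The number of dummy jobs, `5q - 4β(q)`. -/
def ndN : ℕ := 5 * q - 4 * betaN q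

/-- The jobs of the hard instance, given the triplets `τ`. -/
def jobOf (nd : ℕ) (τ : Fin (2 * q) → Fin q × Fin q × Fin q) : Idx q nd → Job
  | .aX i  => ⟨0, 20000 * γ q - 4 * x' q i, 999 * γ q + 4 * x' q i⟩
  | .aX' i => ⟨20000 * γ q - 4 * x' q i, 40000 * γ q, 1001 * γ q - 4 * x' q i⟩
  | .aY j  => ⟨0, 20000 * γ q - 4 * y' q j, 999 * γ q + 4 * y' q j⟩
  | .aY' j => ⟨20000 * γ q - 4 * y' q j, 40000 * γ q, 1001 * γ q - 4 * y' q j⟩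
  | .aZ k  => ⟨0, 20000 * γ q - 4 * z' q k, 999 * γ q + 4 * z' q k⟩
  | .aZ' k => ⟨20000 * γ q - 4 * z' q k, 40000 * γ q, 1001 * γ q - 4 * z' q k⟩
  | .b l   => ⟨0, 19001 * γ q - 4 * τ' q (τ l), 999 * γ q + 4 * τ' q (τ l)⟩
  | .b' l  => ⟨19001 * γ q - 4 * τ' q (τ l), 40000 * γ q, 1001 * γ q - 4 * τ' q (τ l)⟩
  | .dummy _ => ⟨0, 40000 * γ q, 2997 * γ q⟩

/-- The given triplet family is a 2-bounded-occurrence 3-dimensional matching instance: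
the `2q` triplets are pairwise distinct and each element of `X ∪ Y ∪ Z` occurs in
exactly two triplets. -/
def Is2B3DM (τ : Fin (2 * q) → Fin q × Fin q × Fin q) : Prop :=
  Function.Injective τ ∧
  (∀ i : Fin q, (Finset.univ.filter fun l => (τ l).1 = i).card = 2) ∧
  (∀ j : Fin q, (Finset.univ.filter fun l => (τ l).2.1 = j).card = 2) ∧
  (∀ k : Fin q, (Finset.univ.filter fun l => (τ l).2.2 = k).card = 2)

/-- A matching: no two (distinct) chosen triplets agree in any coordinate. -/
def IsMatching (τ : Fin (2 * q) → Fin q × Fin q × Fin q) (M : Finset (Fin (2 * q))) : Prop :=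
  ∀ l ∈ M, ∀ l' ∈ M, l ≠ l' →
    (τ l).1 ≠ (τ l').1 ∧ (τ l).2.1 ≠ (τ l').2.1 ∧ (τ l).2.2 ≠ (τ l').2.2

/-- A set `S` of jobs is a feasible round if on every edge of the path the
total demand of jobs of `S` using that edge is at most the capacity `4000 γ`. -/
def FeasibleRound {ι : Type*} (job : ι → Job) (S : Finset ι) : Prop :=
  ∀ k : ℤ, 1 ≤ k → k ≤ 40000 * γ q →
    (∑ idx ∈ S, if (job idx).uses k then (job idx).d else 0) ≤ 4000 * γ q


end Hard

namespace Idx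

variable {q nd : ℕ}

/-- The job is a dummy job. -/
def isDummy : Idx q nd → Prop
  | .dummy _ => True
  | _ => False

/-- The job belongs to `A = A_X ∪ A_Y ∪ A_Z`. -/
def inA : Idx q nd → Prop
  | .aX _ | .aY _ | .aZ _ => True
  | _ => False

/-- The job belongs to `A' = A'_X ∪ A'_Y ∪ A'_Z`. -/
def inA' : Idx q nd → Prop
  | .aX' _ | .aY' _ | .aZ' _ => True
  | _ => False

/-- The job belongs to `B`. -/
def inB : Idx q nd → Prop
  | .b _ => True
  | _ => False

/-- The job belongs to `B'`. -/
def inB' : Idx q nd → Prop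
  | .b' _ => True
  | _ => False

/-- The job belongs to `A ∪ B`. -/
def inAB : Idx q nd → Prop
  | .aX _ | .aY _ | .aZ _ | .b _ => True
  | _ => False

/-- The job belongs to `A' ∪ B'`. -/
def inA'B' : Idx q nd → Prop
  | .aX' _ | .aY' _ | .aZ' _ | .b' _ => True
  | _ => False

end Idx



namespace HardAux

lemma rho_ge (q : ℕ) (hq : 1 ≤ q) : (32:ℤ) ≤ Hard.ρ q := by
  have h : (1:ℤ) ≤ (q:ℤ) := by exact_mod_cast hq
  unfold Hard.ρ; linarith

lemma gamma_eq (q : ℕ) : Hard.γ q = Hard.ρ q ^ 4 + 15 := rfl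

lemma gamma_ge (q : ℕ) (hq : 1 ≤ q) : (1:ℤ) ≤ Hard.γ q := by
  have h := rho_ge q hq
  have h2 : (0:ℤ) ≤ Hard.ρ q ^ 4 := by positivity
  rw [gamma_eq]; linarith

lemma fin_bounds (q : ℕ) (i : Fin q) :
    (1:ℤ) ≤ ((i:ℕ):ℤ) + 1 ∧ 32 * (((i:ℕ):ℤ) + 1) ≤ Hard.ρ q := by
  have h0 : (0:ℤ) ≤ ((i:ℕ):ℤ) := Int.ofNat_nonneg _
  have h1 : ((i:ℕ):ℤ) < (q:ℤ) := by exact_mod_cast i.isLt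
  refine ⟨by linarith, ?_⟩
  unfold Hard.ρ; linarith

lemma xb' (r n : ℤ) (hr : 32 ≤ r) (hn : 1 ≤ n) (hnq : 32 * n ≤ r) :
    0 < n * r + 1 ∧ 4 * (n * r + 1) ≤ r ^ 4 + 15 := by
  constructor
  · nlinarith
  · nlinarith [mul_le_mul_of_nonneg_right hnq (by linarith : (0:ℤ) ≤ r),
      mul_le_mul_of_nonneg_right hr (by positivity : (0:ℤ) ≤ r * r * r),
      mul_le_mul_of_nonneg_right hr (by positivity : (0:ℤ) ≤ r * r)]

lemma yb' (r n : ℤ) (hr : 32 ≤ r) (hn : 1 ≤ n) (hnq : 32 * n ≤ r) :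
    0 < n * r ^ 2 + 2 ∧ 4 * (n * r ^ 2 + 2) ≤ r ^ 4 + 15 := by
  constructor
  · nlinarith [mul_le_mul_of_nonneg_right hn (by positivity : (0:ℤ) ≤ r * r)]
  · nlinarith [mul_le_mul_of_nonneg_right hnq (by positivity : (0:ℤ) ≤ r * r),
      mul_le_mul_of_nonneg_right hr (by positivity : (0:ℤ) ≤ r * r * r)]

lemma zb' (r n : ℤ) (hr : 32 ≤ r) (hn : 1 ≤ n) (hnq : 32 * n ≤ r) :
    0 < n * r ^ 3 + 4 ∧ 4 * (n * r ^ 3 + 4) ≤ r ^ 4 + 15 := by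
  constructor
  · nlinarith [mul_le_mul_of_nonneg_right hn (by positivity : (0:ℤ) ≤ r * r * r)]
  · nlinarith [mul_le_mul_of_nonneg_right hnq (by positivity : (0:ℤ) ≤ r * r * r),
      mul_le_mul_of_nonneg_right hr (by positivity : (0:ℤ) ≤ r * r * r)]

lemma tb' (r a b c : ℤ) (hr : 32 ≤ r) (ha : 1 ≤ a) (hb : 1 ≤ b) (hc : 1 ≤ c)
    (haq : 32 * a ≤ r) (hbq : 32 * b ≤ r) (hcq : 32 * c ≤ r) :
    0 < r ^ 4 - c * r ^ 3 - b * r ^ 2 - a * r + 8 ∧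
      r ^ 4 - c * r ^ 3 - b * r ^ 2 - a * r + 8 ≤ r ^ 4 + 15 := by
  have hr0 : (0:ℤ) ≤ r := by linarith
  constructor
  · nlinarith [mul_le_mul_of_nonneg_right hcq (by positivity : (0:ℤ) ≤ r * r * r),
      mul_le_mul_of_nonneg_right hbq (by positivity : (0:ℤ) ≤ r * r),
      mul_le_mul_of_nonneg_right haq hr0,
      mul_le_mul_of_nonneg_right hr (by positivity : (0:ℤ) ≤ r * r),
      mul_le_mul_of_nonneg_right hr hr0]
  · nlinarith [mul_le_mul_of_nonneg_right ha hr0,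
      mul_le_mul_of_nonneg_right hb (by positivity : (0:ℤ) ≤ r * r),
      mul_le_mul_of_nonneg_right hc (by positivity : (0:ℤ) ≤ r * r * r)]

lemma xb (q : ℕ) (hq : 1 ≤ q) (i : Fin q) :
    0 < Hard.x' q i ∧ 4 * Hard.x' q i ≤ Hard.γ q := by
  obtain ⟨h1, h2⟩ := fin_bounds q i
  rw [gamma_eq]
  exact xb' (Hard.ρ q) _ (rho_ge q hq) h1 h2

lemma yb (q : ℕ) (hq : 1 ≤ q) (i : Fin q) :
    0 < Hard.y' q i ∧ 4 * Hard.y' q i ≤ Hard.γ q := by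
  obtain ⟨h1, h2⟩ := fin_bounds q i
  rw [gamma_eq]
  exact yb' (Hard.ρ q) _ (rho_ge q hq) h1 h2

lemma zb (q : ℕ) (hq : 1 ≤ q) (i : Fin q) :
    0 < Hard.z' q i ∧ 4 * Hard.z' q i ≤ Hard.γ q := by
  obtain ⟨h1, h2⟩ := fin_bounds q i
  rw [gamma_eq]
  exact zb' (Hard.ρ q) _ (rho_ge q hq) h1 h2

lemma taub (q : ℕ) (hq : 1 ≤ q) (t : Fin q × Fin q × Fin q) :
    0 < Hard.τ' q t ∧ Hard.τ' q t ≤ Hard.γ q := by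
  obtain ⟨ha1, ha2⟩ := fin_bounds q t.1
  obtain ⟨hb1, hb2⟩ := fin_bounds q t.2.1
  obtain ⟨hc1, hc2⟩ := fin_bounds q t.2.2
  rw [gamma_eq]
  exact tb' (Hard.ρ q) _ _ _ (rho_ge q hq) ha1 hb1 hc1 ha2 hb2 hc2

lemma job_facts (q : ℕ) (hq : 1 ≤ q) (τ : Fin (2 * q) → Fin q × Fin q × Fin q)
    (idx : Idx q (Hard.ndN q)) :
    0 ≤ (Hard.jobOf q (Hard.ndN q) τ idx).d ∧
    ((idx.inAB ∨ idx.isDummy) → (Hard.jobOf q (Hard.ndN q) τ idx).uses 1 ∧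
      999 * Hard.γ q ≤ (Hard.jobOf q (Hard.ndN q) τ idx).d) ∧
    ((idx.inA'B' ∨ idx.isDummy) → (Hard.jobOf q (Hard.ndN q) τ idx).uses (40000 * Hard.γ q) ∧
      997 * Hard.γ q ≤ (Hard.jobOf q (Hard.ndN q) τ idx).d) := by
  have hγ := gamma_ge q hq
  cases idx with
  | aX i =>
    obtain ⟨h1, h2⟩ := xb q hq i
    simp only [Hard.jobOf, Idx.inAB, Idx.isDummy, Idx.inA'B', Job.uses, or_self, false_or,
      or_false]
    exact ⟨by linarith, fun _ => ⟨⟨by norm_num, by linarith⟩, by linarith⟩, fun h => h.elim⟩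
  | aY i =>
    obtain ⟨h1, h2⟩ := yb q hq i
    simp only [Hard.jobOf, Idx.inAB, Idx.isDummy, Idx.inA'B', Job.uses, or_self, false_or,
      or_false]
    exact ⟨by linarith, fun _ => ⟨⟨by norm_num, by linarith⟩, by linarith⟩, fun h => h.elim⟩
  | aZ i =>
    obtain ⟨h1, h2⟩ := zb q hq i
    simp only [Hard.jobOf, Idx.inAB, Idx.isDummy, Idx.inA'B', Job.uses, or_self, false_or,
      or_false]
    exact ⟨by linarith, fun _ => ⟨⟨by norm_num, by linarith⟩, by linarith⟩, fun h => h.elim⟩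
  | b l =>
    obtain ⟨h1, h2⟩ := taub q hq (τ l)
    simp only [Hard.jobOf, Idx.inAB, Idx.isDummy, Idx.inA'B', Job.uses, or_self, false_or,
      or_false]
    exact ⟨by linarith, fun _ => ⟨⟨by norm_num, by linarith⟩, by linarith⟩, fun h => h.elim⟩
  | aX' i =>
    obtain ⟨h1, h2⟩ := xb q hq i
    simp only [Hard.jobOf, Idx.inAB, Idx.isDummy, Idx.inA'B', Job.uses, or_self, false_or,
      or_false]
    exact ⟨by linarith, fun h => h.elim, fun _ => ⟨⟨by linarith, le_refl _⟩, by linarith⟩⟩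
  | aY' i =>
    obtain ⟨h1, h2⟩ := yb q hq i
    simp only [Hard.jobOf, Idx.inAB, Idx.isDummy, Idx.inA'B', Job.uses, or_self, false_or,
      or_false]
    exact ⟨by linarith, fun h => h.elim, fun _ => ⟨⟨by linarith, le_refl _⟩, by linarith⟩⟩
  | aZ' i =>
    obtain ⟨h1, h2⟩ := zb q hq i
    simp only [Hard.jobOf, Idx.inAB, Idx.isDummy, Idx.inA'B', Job.uses, or_self, false_or,
      or_false]
    exact ⟨by linarith, fun h => h.elim, fun _ => ⟨⟨by linarith, le_refl _⟩, by linarith⟩⟩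
  | b' l =>
    obtain ⟨h1, h2⟩ := taub q hq (τ l)
    simp only [Hard.jobOf, Idx.inAB, Idx.isDummy, Idx.inA'B', Job.uses, or_self, false_or,
      or_false]
    exact ⟨by linarith, fun h => h.elim, fun _ => ⟨⟨by linarith, le_refl _⟩, by linarith⟩⟩
  | dummy d =>
    simp only [Hard.jobOf, Idx.inAB, Idx.isDummy, Idx.inA'B', Job.uses, or_self, false_or,
      or_false, or_true]
    exact ⟨by linarith, fun _ => ⟨⟨by norm_num, by linarith⟩, by linarith⟩,
      fun _ => ⟨⟨by linarith, le_refl _⟩, by linarith⟩⟩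

end HardAux

/-- In the hard instance, every feasible round that contains a dummy job
contains at most three jobs: at most one dummy job, at most one job from `A ∪ B`, and at
most one job from `A' ∪ B'`. -/
theorem hard_instance_dummy_round (q : ℕ) (hq : 1 ≤ q)
    (τ : Fin (2 * q) → Fin q × Fin q × Fin q) (hτ : Hard.Is2B3DM q τ)
    (S : Finset (Idx q (Hard.ndN q)))
    (hS : Hard.FeasibleRound q (Hard.jobOf q (Hard.ndN q) τ) S)
    (hdummy : ∃ dd : Fin (Hard.ndN q), Idx.dummy dd ∈ S) :
    S.card ≤ 3 ∧
    (S.filter fun idx => idx.isDummy).card ≤ 1 ∧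
    (S.filter fun idx => idx.inAB).card ≤ 1 ∧
    (S.filter fun idx => idx.inA'B').card ≤ 1 := by
  classical
  obtain ⟨dd, hdd⟩ := hdummy
  have hγ := HardAux.gamma_ge q hq
  have hfacts := fun idx => HardAux.job_facts q hq τ idx
  -- key bound: any subset of S all of whose members use a fixed edge has total demand ≤ 4000γ
  have key : ∀ k : ℤ, 1 ≤ k → k ≤ 40000 * Hard.γ q → ∀ T : Finset (Idx q (Hard.ndN q)),
      T ⊆ S → (∀ i ∈ T, (Hard.jobOf q (Hard.ndN q) τ i).uses k) → (∑ i ∈ T, (Hard.jobOf q (Hard.ndN q) τ i).d) ≤ 4000 * Hard.γ q := by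
    intro k hk1 hk2 T hT hTuse
    have hfe := hS k hk1 hk2
    calc (∑ i ∈ T, (Hard.jobOf q (Hard.ndN q) τ i).d)
        = ∑ i ∈ T, (if (Hard.jobOf q (Hard.ndN q) τ i).uses k then (Hard.jobOf q (Hard.ndN q) τ i).d else 0) := by
          refine Finset.sum_congr rfl fun i hi => ?_
          rw [if_pos (hTuse i hi)]
      _ ≤ ∑ i ∈ S, (if (Hard.jobOf q (Hard.ndN q) τ i).uses k then (Hard.jobOf q (Hard.ndN q) τ i).d else 0) := by
          refine Finset.sum_le_sum_of_subset_of_nonneg hT fun i _ _ => ?_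
          split
          · exact (hfacts i).1
          · exact le_refl 0
      _ ≤ 4000 * Hard.γ q := hfe
  have hdd_dummy : (Idx.dummy dd : Idx q (Hard.ndN q)).isDummy := trivial
  have hdummy_d : ∀ a : Idx q (Hard.ndN q), a.isDummy →
      (Hard.jobOf q (Hard.ndN q) τ a).d = 2997 * Hard.γ q := by
    intro a h
    cases a <;> first | exact h.elim | rfl
  have hdd_d : (Hard.jobOf q (Hard.ndN q) τ (Idx.dummy dd)).d = 2997 * Hard.γ q := rfl
  -- at most one dummy
  have hD : (S.filter fun idx => idx.isDummy).card ≤ 1 := by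
    rw [Finset.card_le_one]
    intro a ha b hb
    by_contra hne
    simp only [Finset.mem_filter] at ha hb
    have hause := ((hfacts a).2.1 (Or.inr ha.2)).1
    have hbuse := ((hfacts b).2.1 (Or.inr hb.2)).1
    have had := hdummy_d a ha.2
    have hbd := hdummy_d b hb.2
    have hk := key 1 le_rfl (by linarith) {a, b} (by
        intro x hx
        rcases Finset.mem_insert.mp hx with h | h
        · exact h ▸ ha.1
        · exact (Finset.mem_singleton.mp h) ▸ hb.1)
      (by
        intro x hx
        rcases Finset.mem_insert.mp hx with h | h
        · exact h ▸ hause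
        · exact (Finset.mem_singleton.mp h) ▸ hbuse)
    rw [Finset.sum_pair hne] at hk
    linarith
  -- at most one job in A ∪ B
  have hAB : (S.filter fun idx => idx.inAB).card ≤ 1 := by
    rw [Finset.card_le_one]
    intro a ha b hb
    by_contra hne
    simp only [Finset.mem_filter] at ha hb
    have hause := ((hfacts a).2.1 (Or.inl ha.2)).1
    have hbuse := ((hfacts b).2.1 (Or.inl hb.2)).1
    have had := ((hfacts a).2.1 (Or.inl ha.2)).2
    have hbd := ((hfacts b).2.1 (Or.inl hb.2)).2
    have hduse := ((hfacts (Idx.dummy dd)).2.1 (Or.inr hdd_dummy)).1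
    have hda : (Idx.dummy dd : Idx q (Hard.ndN q)) ≠ a := by
      intro h; rw [← h] at ha; exact ha.2
    have hdb : (Idx.dummy dd : Idx q (Hard.ndN q)) ≠ b := by
      intro h; rw [← h] at hb; exact hb.2
    have hnotmem : (Idx.dummy dd : Idx q (Hard.ndN q)) ∉ ({a, b} : Finset _) := by
      simp [hda, hdb]
    have hk := key 1 le_rfl (by linarith) (insert (Idx.dummy dd) {a, b}) (by
        intro x hx
        rcases Finset.mem_insert.mp hx with h | h
        · exact h ▸ hdd
        rcases Finset.mem_insert.mp h with h | h
        · exact h ▸ ha.1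
        · exact (Finset.mem_singleton.mp h) ▸ hb.1)
      (by
        intro x hx
        rcases Finset.mem_insert.mp hx with h | h
        · exact h ▸ hduse
        rcases Finset.mem_insert.mp h with h | h
        · exact h ▸ hause
        · exact (Finset.mem_singleton.mp h) ▸ hbuse)
    rw [Finset.sum_insert hnotmem, Finset.sum_pair hne, hdd_d] at hk
    linarith
  -- at most one job in A' ∪ B'
  have hAB' : (S.filter fun idx => idx.inA'B').card ≤ 1 := by
    rw [Finset.card_le_one]
    intro a ha b hb
    by_contra hne
    simp only [Finset.mem_filter] at ha hb
    have hause := ((hfacts a).2.2 (Or.inl ha.2)).1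
    have hbuse := ((hfacts b).2.2 (Or.inl hb.2)).1
    have had := ((hfacts a).2.2 (Or.inl ha.2)).2
    have hbd := ((hfacts b).2.2 (Or.inl hb.2)).2
    have hduse := ((hfacts (Idx.dummy dd)).2.2 (Or.inr hdd_dummy)).1
    have hda : (Idx.dummy dd : Idx q (Hard.ndN q)) ≠ a := by
      intro h; rw [← h] at ha; exact ha.2
    have hdb : (Idx.dummy dd : Idx q (Hard.ndN q)) ≠ b := by
      intro h; rw [← h] at hb; exact hb.2
    have hnotmem : (Idx.dummy dd : Idx q (Hard.ndN q)) ∉ ({a, b} : Finset _) := by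
      simp [hda, hdb]
    have hk := key (40000 * Hard.γ q) (by linarith) le_rfl (insert (Idx.dummy dd) {a, b}) (by
        intro x hx
        rcases Finset.mem_insert.mp hx with h | h
        · exact h ▸ hdd
        rcases Finset.mem_insert.mp h with h | h
        · exact h ▸ ha.1
        · exact (Finset.mem_singleton.mp h) ▸ hb.1)
      (by
        intro x hx
        rcases Finset.mem_insert.mp hx with h | h
        · exact h ▸ hduse
        rcases Finset.mem_insert.mp h with h | h
        · exact h ▸ hause
        · exact (Finset.mem_singleton.mp h) ▸ hbuse)
    rw [Finset.sum_insert hnotmem, Finset.sum_pair hne, hdd_d] at hk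
    linarith
  refine ⟨?_, hD, hAB, hAB'⟩
  have hcover : S ⊆ (S.filter fun idx => idx.isDummy) ∪ (S.filter fun idx => idx.inAB) ∪
      (S.filter fun idx => idx.inA'B') := by
    intro i hi
    simp only [Finset.mem_union, Finset.mem_filter]
    cases i <;> simp [Idx.isDummy, Idx.inAB, Idx.inA'B', hi]
  calc S.card ≤ ((S.filter fun idx => idx.isDummy) ∪ (S.filter fun idx => idx.inAB) ∪
      (S.filter fun idx => idx.inA'B')).card := Finset.card_le_card hcover
    _ ≤ ((S.filter fun idx => idx.isDummy) ∪ (S.filter fun idx => idx.inAB)).card +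
        (S.filter fun idx => idx.inA'B').card := Finset.card_union_le _ _
    _ ≤ (S.filter fun idx => idx.isDummy).card + (S.filter fun idx => idx.inAB).card +
        (S.filter fun idx => idx.inA'B').card := by
          have := Finset.card_union_le (S.filter fun idx => idx.isDummy)
            (S.filter fun idx => idx.inAB)
          omega
    _ ≤ 3 := by omega
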